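/- Let Ω be nonempty and X, Y uncertain variables with finite ranges. The maximal non-stochastic brute-force leakage L⋆(X → Y) := sup over functions g (with finite codomain, U = g∘X) of L(U → Y) equals log₂(|⟦X⟧| − min_{y ∈ ⟦Y⟧} |⟦X | Y = y⟧| + 1). -/

import Mathlib

/-!
Let `U = g ∘ X` and let `y` attain `M = min_y |⟦U | Y = y⟧|`. Then `⟦U⟧` is covered by
`g(⟦X | Y = y⟧)`, of size `M`, and by the image of `⟦X⟧ \ ⟦X | Y = y⟧`, of size at most
`|⟦X⟧| - m` where `m = min_y |⟦X | Y = y⟧|`. Hence `|⟦U⟧| / M ≤ (M + |⟦X⟧| - m) / M ≤ |⟦X⟧| - m + 1`,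
as `M ≥ 1`. Collapsing a minimal conditional range `⟦X | Y = y₀⟧` to one of its points gives
`M = 1` and `|⟦U⟧| = |⟦X⟧| - m + 1`, so the bound is attained.
-/
open Set

/-- Conditional range ⟦X | Y = y⟧ = {X ω : Y ω = y}. -/
def crange {Ω 𝕏 𝕐 : Type*} (X : Ω → 𝕏) (Y : Ω → 𝕐) (y : 𝕐) : Set 𝕏 :=
  {x | ∃ ω, Y ω = y ∧ X ω = x}

/-- min_{y ∈ ⟦Y⟧} |⟦X | Y = y⟧|. -/
noncomputable def minCond {Ω 𝕏 𝕐 : Type*} (X : Ω → 𝕏) (Y : Ω → 𝕐) : ℕ :=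
  sInf ((fun y => (crange X Y y).ncard) '' Set.range Y)

/-- Non-stochastic brute-force guessing leakage
L(X → Y) = log₂(|⟦X⟧| / min_{y ∈ ⟦Y⟧} |⟦X|Y=y⟧|). -/
noncomputable def leak {Ω 𝕏 𝕐 : Type*} (X : Ω → 𝕏) (Y : Ω → 𝕐) : ℝ :=
  Real.logb 2 (((Set.range X).ncard : ℝ) / (minCond X Y : ℝ))

/-- Maximal non-stochastic brute-force leakage (closed formula)
L⋆(X → Y) = log₂(|⟦X⟧| − min_{y∈⟦Y⟧}|⟦X|Y=y⟧| + 1). -/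
noncomputable def maxLeak {Ω 𝕏 𝕐 : Type*} (X : Ω → 𝕏) (Y : Ω → 𝕐) : ℝ :=
  Real.logb 2 (((Set.range X).ncard : ℝ) - (minCond X Y : ℝ) + 1)

universe u

theorem Set.ncard_image_add_ncard_le {α β : Type*} (f : α → β) {s t : Set α} (hst : s ⊆ t)
    (ht : t.Finite) : (f '' t).ncard + s.ncard ≤ (f '' s).ncard + t.ncard := by
  have hsplit : f '' t = f '' s ∪ f '' (t \ s) := by
    rw [← image_union, union_sdiff_cancel hst]
  have hunion := ncard_union_le (f '' s) (f '' (t \ s))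
  have himage : (f '' (t \ s)).ncard ≤ (t \ s).ncard := ncard_image_le ht.sdiff
  have hdiff := ncard_sdiff_add_ncard_of_subset hst ht
  rw [hsplit]
  omega

section Crange

variable {Ω 𝕏 𝕐 : Type*} (X : Ω → 𝕏) (Y : Ω → 𝕐)

theorem crange_subset_range (y : 𝕐) : crange X Y y ⊆ range X := by
  rintro x ⟨ω, -, rfl⟩
  exact mem_range_self ω

theorem crange_nonempty {y : 𝕐} (hy : y ∈ range Y) : (crange X Y y).Nonempty := by
  obtain ⟨ω, rfl⟩ := hy
  exact ⟨X ω, ω, rfl, rfl⟩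

theorem crange_comp {𝕌 : Type*} (g : 𝕏 → 𝕌) (y : 𝕐) :
    crange (g ∘ X) Y y = g '' crange X Y y := by
  ext u
  constructor
  · rintro ⟨ω, hω, rfl⟩
    exact ⟨X ω, ⟨ω, hω, rfl⟩, rfl⟩
  · rintro ⟨x, ⟨ω, hω, rfl⟩, rfl⟩
    exact ⟨ω, hω, rfl⟩

theorem minCond_le {y : 𝕐} (hy : y ∈ range Y) : minCond X Y ≤ (crange X Y y).ncard :=
  Nat.sInf_le ⟨y, hy, rfl⟩

theorem exists_ncard_crange_eq_minCond [Nonempty Ω] :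
    ∃ y ∈ range Y, (crange X Y y).ncard = minCond X Y :=
  Nat.sInf_mem ((range_nonempty Y).image _)

variable {X}

theorem one_le_minCond [Nonempty Ω] (hX : (range X).Finite) : 1 ≤ minCond X Y := by
  obtain ⟨y, hy, hmin⟩ := exists_ncard_crange_eq_minCond X Y
  rw [← hmin]
  exact (crange_nonempty X Y hy).ncard_pos (hX.subset (crange_subset_range X Y y))

theorem minCond_le_ncard_range [Nonempty Ω] (hX : (range X).Finite) :
    minCond X Y ≤ (range X).ncard := by
  obtain ⟨y, -, hmin⟩ := exists_ncard_crange_eq_minCond X Y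
  rw [← hmin]
  exact ncard_le_ncard (crange_subset_range X Y y) hX

end Crange

open Classical in
noncomputable def collapse {α : Type*} (s : Set α) (a : α) (x : α) : α :=
  if x ∈ s then a else x

theorem image_collapse_self {α : Type*} {s : Set α} {a : α} (ha : a ∈ s) :
    collapse s a '' s = {a} := by
  refine Subset.antisymm ?_ (singleton_subset_iff.mpr ⟨a, ha, if_pos ha⟩)
  rintro _ ⟨x, hx, rfl⟩
  exact if_pos hx

theorem image_collapse_of_subset {α : Type*} {s t : Set α} {a : α} (hst : s ⊆ t) (ha : a ∈ s) :
    collapse s a '' t = insert a (t \ s) := by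
  ext u
  constructor
  · rintro ⟨x, hx, rfl⟩
    by_cases hxs : x ∈ s
    · exact Or.inl (if_pos hxs)
    · exact Or.inr (by simpa [collapse, hxs] using hx)
  · rintro (rfl | ⟨hu, hus⟩)
    · exact ⟨u, hst ha, if_pos ha⟩
    · exact ⟨u, hu, if_neg hus⟩

theorem ncard_image_collapse_add_ncard {α : Type*} {s t : Set α} {a : α} (hst : s ⊆ t)
    (ha : a ∈ s) (ht : t.Finite) : (collapse s a '' t).ncard + s.ncard = t.ncard + 1 := by
  rw [image_collapse_of_subset hst ha, ncard_insert_of_notMem (fun h => h.2 ha) ht.sdiff,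
    add_right_comm, ncard_sdiff_add_ncard_of_subset hst ht]

theorem div_le_sub_add_one_of_add_le {N M n m : ℝ} (hM : 1 ≤ M) (hmn : m ≤ n)
    (h : N + m ≤ M + n) : N / M ≤ n - m + 1 := by
  rw [div_le_iff₀ (by linarith)]
  nlinarith

theorem Set.Finite.range_comp {Ω 𝕏 𝕌 : Type*} {X : Ω → 𝕏} (hX : (range X).Finite)
    (g : 𝕏 → 𝕌) : (range (g ∘ X)).Finite := by
  rw [Set.range_comp]
  exact hX.image g

section Leakage

variable {Ω 𝕏 𝕐 : Type*} [Nonempty Ω] {X : Ω → 𝕏} (Y : Ω → 𝕐)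

theorem ncard_range_comp_add_minCond_le (hX : (range X).Finite) {𝕌 : Type*} (g : 𝕏 → 𝕌) :
    (range (g ∘ X)).ncard + minCond X Y ≤ minCond (g ∘ X) Y + (range X).ncard := by
  obtain ⟨y, hy, hmin⟩ := exists_ncard_crange_eq_minCond (g ∘ X) Y
  have hcoarse := ncard_image_add_ncard_le g (crange_subset_range X Y y) hX
  rw [← crange_comp, hmin, ← range_comp] at hcoarse
  have := minCond_le X Y hy
  omega

theorem leak_comp_le_maxLeak (hX : (range X).Finite) {𝕌 : Type*} (g : 𝕏 → 𝕌) :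
    leak (g ∘ X) Y ≤ maxLeak X Y := by
  have hN : 0 < (range (g ∘ X)).ncard := (range_nonempty _).ncard_pos (hX.range_comp g)
  have hM := one_le_minCond Y (hX.range_comp g)
  have hmn := minCond_le_ncard_range Y hX
  have hcount := ncard_range_comp_add_minCond_le Y hX g
  refine Real.logb_le_logb_of_le one_lt_two (by positivity) ?_
  exact div_le_sub_add_one_of_add_le (by exact_mod_cast hM) (by exact_mod_cast hmn)
    (by exact_mod_cast hcount)

theorem exists_leak_comp_eq_maxLeak (hX : (range X).Finite) :
    ∃ g : 𝕏 → 𝕏, leak (g ∘ X) Y = maxLeak X Y := by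
  obtain ⟨y, hy, hmin⟩ := exists_ncard_crange_eq_minCond X Y
  obtain ⟨a, ha⟩ := crange_nonempty X Y hy
  set g := collapse (crange X Y y) a
  have hM : minCond (g ∘ X) Y = 1 := by
    refine le_antisymm ?_ (one_le_minCond Y (hX.range_comp g))
    simpa [crange_comp, g, image_collapse_self ha] using minCond_le (g ∘ X) Y hy
  have hcount := ncard_image_collapse_add_ncard (crange_subset_range X Y y) ha hX
  rw [hmin, ← range_comp] at hcount
  refine ⟨g, ?_⟩
  rw [leak, maxLeak, hM, Nat.cast_one, div_one]
  congr 1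
  have : ((range (g ∘ X)).ncard : ℝ) + minCond X Y = (range X).ncard + 1 := by
    exact_mod_cast hcount
  linarith

end Leakage

theorem stmt_8_general {Ω 𝕏 𝕐 : Type u} [Nonempty Ω] (X : Ω → 𝕏) (Y : Ω → 𝕐)
    (hX : (Set.range X).Finite) :
    (∀ (𝕌 : Type u) (g : 𝕏 → 𝕌),
        leak (g ∘ X) Y ≤
          Real.logb 2 (((Set.range X).ncard : ℝ) - (minCond X Y : ℝ) + 1)) ∧
    (∃ (𝕌 : Type u) (g : 𝕏 → 𝕌),
        leak (g ∘ X) Y =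
          Real.logb 2 (((Set.range X).ncard : ℝ) - (minCond X Y : ℝ) + 1)) :=
  ⟨fun _ g => leak_comp_le_maxLeak Y hX g, ⟨𝕏, exists_leak_comp_eq_maxLeak Y hX⟩⟩

theorem stmt_8 {Ω 𝕏 𝕐 : Type u} [Nonempty Ω] (X : Ω → 𝕏) (Y : Ω → 𝕐)
    (hX : (Set.range X).Finite) (hY : (Set.range Y).Finite) :
    (∀ (𝕌 : Type u) (g : 𝕏 → 𝕌),
        leak (g ∘ X) Y ≤
          Real.logb 2 (((Set.range X).ncard : ℝ) - (minCond X Y : ℝ) + 1)) ∧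
    (∃ (𝕌 : Type u) (g : 𝕏 → 𝕌),
        leak (g ∘ X) Y =
          Real.logb 2 (((Set.range X).ncard : ℝ) - (minCond X Y : ℝ) + 1)) :=
  stmt_8_general X Y hX
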